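/- Define the quadratic forms Q₁(u,v,w) := u² + v² − w², Q₂(u,v,w) := u² + v², Q₃(u,v,w) := −24u² − 15v² + w² on ℝ³. Let ℝP¹ be the quotient topological space of ℝ²∖{0} by the scaling action of ℝ∖{0}, and let S₁ := { [t₀ : t₁] ∈ ℝP¹ : ∃ (u,v,w) ∈ ℝ³∖{0}, t₀²Q₁(u,v,w) + 2t₀t₁Q₂(u,v,w) + t₁²Q₃(u,v,w) ≥ 0 }. Then S₁ has exactly two connected components. (Consequently the real locus Y(ℝ) of the associated double cover has exactly two connected components; in this example the real isotopy class of the discriminant quartic Δ is two nested ovals.) -/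

import Mathlib

/-- The scaling relation on nonzero vectors of `ℝⁿ`. -/
def projRel (n : ℕ) (v w : {x : Fin n → ℝ // x ≠ 0}) : Prop :=
  ∃ c : ℝ, c ≠ 0 ∧ c • (v : Fin n → ℝ) = (w : Fin n → ℝ)

/-- The real projective space `ℝPⁿ⁻¹`, as the quotient topological space of `ℝⁿ ∖ {0}` by the
scaling action of `ℝ ∖ {0}`. -/
def RP (n : ℕ) : Type := Quot (projRel n)

instance (n : ℕ) : TopologicalSpace (RP n) :=
  inferInstanceAs (TopologicalSpace (Quot (projRel n)))

/-- `Q₁(u,v,w) = u² + v² − w²`. -/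
def Q₁ (u v w : ℝ) : ℝ := u ^ 2 + v ^ 2 - w ^ 2

/-- `Q₂(u,v,w) = u² + v²`. -/
def Q₂ (u v w : ℝ) : ℝ := u ^ 2 + v ^ 2

/-- `Q₃(u,v,w) = −24u² − 15v² + w²`. -/
def Q₃ (u v w : ℝ) : ℝ := -24 * u ^ 2 - 15 * v ^ 2 + w ^ 2


/-! The pencil is diagonal: `t₀²Q₁ + 2t₀t₁Q₂ + t₁²Q₃ = (b − 9t₁²) u² + b v² + c w²` with
`b = coeffV t = (t₀ + 5t₁)(t₀ − 3t₁)` and `c = coeffW t = t₁² − t₀²`. A diagonal form takes a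
nonnegative value at a nonzero vector iff one of its coefficients is nonnegative, so
`S₁ = {c ≥ 0} ∪ {b ≥ 0}`. In affine charts these are the arcs `[s : 1]`, `|s| ≤ 1`, and `[1 : s]`,
`−1/5 ≤ s ≤ 1/3`: closed, connected, and disjoint (where `|t₀| ≤ |t₁|` one has `b ≤ −12t₁²`),
hence the two connected components of `S₁`. -/

open Set

noncomputable def IsClopen.connectedComponentsEquivBool {Y : Type*} [TopologicalSpace Y]
    {U : Set Y} (hU : IsClopen U) (hUc : IsConnected U) (hUcc : IsConnected Uᶜ) :
    ConnectedComponents Y ≃ Bool :=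
  ConnectedComponents.equivOfIsClopenOfIsConnected (U := fun b => cond b U Uᶜ)
    (Bool.forall_bool.mpr ⟨hU.compl, hU⟩) (pairwise_disjoint_on_bool.mpr disjoint_compl_right)
    (by rw [← union_eq_iUnion, union_compl_self]) (Bool.forall_bool.mpr ⟨hUcc, hUc⟩)

theorem IsConnected.preimage_subtypeVal {X : Type*} [TopologicalSpace X] {S C : Set X}
    (hC : IsConnected C) (hCS : C ⊆ S) : IsConnected (Subtype.val ⁻¹' C : Set S) := by
  obtain ⟨x, hx⟩ := hC.nonempty
  refine ⟨⟨⟨x, hCS hx⟩, hx⟩, Topology.IsInducing.subtypeVal.isPreconnected_image.mp ?_⟩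
  rw [Subtype.image_preimage_coe, inter_eq_right.mpr hCS]
  exact hC.isPreconnected

theorem nonempty_connectedComponents_equiv_fin_two_of_union {X : Type*} [TopologicalSpace X]
    {S A B : Set X} (hS : S = A ∪ B) (hA : IsClosed A) (hB : IsClosed B) (hAB : Disjoint A B)
    (hAc : IsConnected A) (hBc : IsConnected B) : Nonempty (ConnectedComponents S ≃ Fin 2) := by
  have compl_A : (Subtype.val ⁻¹' A : Set S)ᶜ = Subtype.val ⁻¹' B := by
    ext ⟨x, hx⟩
    rw [hS] at hx
    exact ⟨hx.resolve_left, fun hxB hxA => hAB.notMem_of_mem_left hxA hxB⟩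
  have hclopen : IsClopen (Subtype.val ⁻¹' A : Set S) :=
    ⟨hA.preimage continuous_subtype_val,
      by rw [← isClosed_compl_iff, compl_A]; exact hB.preimage continuous_subtype_val⟩
  exact ⟨(hclopen.connectedComponentsEquivBool (hAc.preimage_subtypeVal (hS ▸ subset_union_left))
    (compl_A ▸ hBc.preimage_subtypeVal (hS ▸ subset_union_right))).trans finTwoEquiv.symm⟩

theorem eq_zero_of_apply_zero_of_apply_one {M : Type*} [Zero M] {t : Fin 2 → M}
    (h0 : t 0 = 0) (h1 : t 1 = 0) : t = 0 :=
  funext (Fin.forall_fin_two.mpr ⟨h0, h1⟩)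

theorem exists_ne_zero_diag_nonneg_iff (a b c : ℝ) :
    (∃ u v w : ℝ, (u, v, w) ≠ (0, 0, 0) ∧ 0 ≤ a * u ^ 2 + b * v ^ 2 + c * w ^ 2) ↔
      0 ≤ a ∨ 0 ≤ b ∨ 0 ≤ c := by
  constructor
  · rintro ⟨u, v, w, hne, hval⟩
    by_contra! ⟨ha, hb, hc⟩
    have hu := mul_nonpos_of_nonpos_of_nonneg ha.le (sq_nonneg u)
    have hv := mul_nonpos_of_nonpos_of_nonneg hb.le (sq_nonneg v)
    have hw := mul_nonpos_of_nonpos_of_nonneg hc.le (sq_nonneg w)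
    obtain hu' | hv' | hw' : u ≠ 0 ∨ v ≠ 0 ∨ w ≠ 0 := by
      contrapose! hne; simp [hne]
    · linarith [mul_neg_of_neg_of_pos ha (sq_pos_of_ne_zero hu')]
    · linarith [mul_neg_of_neg_of_pos hb (sq_pos_of_ne_zero hv')]
    · linarith [mul_neg_of_neg_of_pos hc (sq_pos_of_ne_zero hw')]
  · rintro (h | h | h)
    · exact ⟨1, 0, 0, by simp, by simpa⟩
    · exact ⟨0, 1, 0, by simp, by simpa⟩
    · exact ⟨0, 0, 1, by simp, by simpa⟩

namespace RP

theorem projRel_equivalence (n : ℕ) : Equivalence (projRel n) where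
  refl _ := ⟨1, one_ne_zero, one_smul _ _⟩
  symm := fun ⟨c, hc, h⟩ =>
    ⟨c⁻¹, inv_ne_zero hc, by rw [← h, smul_smul, inv_mul_cancel₀ hc, one_smul]⟩
  trans := fun ⟨c, hc, h⟩ ⟨d, hd, h'⟩ => ⟨d * c, mul_ne_zero hd hc, by rw [mul_smul, h, h']⟩

variable {n : ℕ}

theorem mk_eq_mk_iff {v w : {x : Fin n → ℝ // x ≠ 0}} :
    Quot.mk (projRel n) v = Quot.mk (projRel n) w ↔ projRel n v w :=
  Quot.eq.trans (projRel_equivalence n).eqvGen_iff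

def nonnegLocus (f : (Fin n → ℝ) → ℝ) : Set (RP n) :=
  {x | ∃ t : {x : Fin n → ℝ // x ≠ 0}, Quot.mk (projRel n) t = x ∧ 0 ≤ f t}

def chart₀ (s : ℝ) : RP 2 := Quot.mk _ ⟨![1, s], fun h => one_ne_zero (congrFun h 0)⟩

def chart₁ (s : ℝ) : RP 2 := Quot.mk _ ⟨![s, 1], fun h => one_ne_zero (congrFun h 1)⟩

theorem continuous_chart₀ : Continuous chart₀ :=
  continuous_quot_mk.comp (Continuous.subtype_mk (by fun_prop) _)

theorem continuous_chart₁ : Continuous chart₁ :=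
  continuous_quot_mk.comp (Continuous.subtype_mk (by fun_prop) _)

theorem eq_apply_zero_smul {t : Fin 2 → ℝ} (h : t 0 ≠ 0) : t = t 0 • ![1, t 1 / t 0] := by
  ext i; fin_cases i <;> simp [mul_div_cancel₀ _ h]

theorem eq_apply_one_smul {t : Fin 2 → ℝ} (h : t 1 ≠ 0) : t = t 1 • ![t 0 / t 1, 1] := by
  ext i; fin_cases i <;> simp [mul_div_cancel₀ _ h]

theorem mk_eq_chart₀ {t : {x : Fin 2 → ℝ // x ≠ 0}} (h : t.1 0 ≠ 0) :
    Quot.mk (projRel 2) t = chart₀ (t.1 1 / t.1 0) :=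
  (Quot.sound ⟨t.1 0, h, (eq_apply_zero_smul h).symm⟩).symm

theorem mk_eq_chart₁ {t : {x : Fin 2 → ℝ // x ≠ 0}} (h : t.1 1 ≠ 0) :
    Quot.mk (projRel 2) t = chart₁ (t.1 0 / t.1 1) :=
  (Quot.sound ⟨t.1 1, h, (eq_apply_one_smul h).symm⟩).symm

section Homogeneous

variable {f : (Fin n → ℝ) → ℝ} (hf : ∀ (c : ℝ) t, f (c • t) = c ^ 2 * f t)
include hf

theorem mk_mem_nonnegLocus_iff {t : {x : Fin n → ℝ // x ≠ 0}} :
    Quot.mk (projRel n) t ∈ nonnegLocus f ↔ 0 ≤ f t := by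
  refine ⟨fun ⟨s, hst, hs⟩ => ?_, fun ht => ⟨t, rfl, ht⟩⟩
  obtain ⟨c, hc, hcs⟩ := mk_eq_mk_iff.mp hst
  rwa [← hcs, hf, mul_nonneg_iff_of_pos_left (by positivity)]

theorem isClosed_nonnegLocus (hcont : Continuous f) : IsClosed (nonnegLocus f) := by
  refine (isQuotientMap_quot_mk (r := projRel n)).isClosed_preimage.mp ?_
  have : Quot.mk (projRel n) ⁻¹' nonnegLocus f = {t : {x : Fin n → ℝ // x ≠ 0} | 0 ≤ f t} := by
    ext t; exact mk_mem_nonnegLocus_iff hf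
  exact this ▸ isClosed_le continuous_const (hcont.comp continuous_subtype_val)

end Homogeneous

section Homogeneous₂

variable {f : (Fin 2 → ℝ) → ℝ} (hf : ∀ (c : ℝ) t, f (c • t) = c ^ 2 * f t)
include hf

theorem nonnegLocus_eq_image_chart₀ (hmiss : ∀ t, 0 ≤ f t → t 0 = 0 → t = 0) :
    nonnegLocus f = chart₀ '' {s | 0 ≤ f ![1, s]} := by
  ext x
  obtain ⟨t, rfl⟩ := Quot.exists_rep x
  refine ⟨fun hx => ?_, fun ⟨s, hs, hsx⟩ => hsx ▸ ⟨_, rfl, hs⟩⟩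
  have ht := (mk_mem_nonnegLocus_iff hf).mp hx
  have h0 : t.1 0 ≠ 0 := fun h => t.2 (hmiss t ht h)
  rw [eq_apply_zero_smul h0, hf, mul_nonneg_iff_of_pos_left (by positivity)] at ht
  exact ⟨_, ht, (mk_eq_chart₀ h0).symm⟩

theorem nonnegLocus_eq_image_chart₁ (hmiss : ∀ t, 0 ≤ f t → t 1 = 0 → t = 0) :
    nonnegLocus f = chart₁ '' {s | 0 ≤ f ![s, 1]} := by
  ext x
  obtain ⟨t, rfl⟩ := Quot.exists_rep x
  refine ⟨fun hx => ?_, fun ⟨s, hs, hsx⟩ => hsx ▸ ⟨_, rfl, hs⟩⟩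
  have ht := (mk_mem_nonnegLocus_iff hf).mp hx
  have h1 : t.1 1 ≠ 0 := fun h => t.2 (hmiss t ht h)
  rw [eq_apply_one_smul h1, hf, mul_nonneg_iff_of_pos_left (by positivity)] at ht
  exact ⟨_, ht, (mk_eq_chart₁ h1).symm⟩

end Homogeneous₂

end RP

namespace TwoNestedOvals

open RP

def coeffV (t : Fin 2 → ℝ) : ℝ := t 0 ^ 2 + 2 * t 0 * t 1 - 15 * t 1 ^ 2

def coeffW (t : Fin 2 → ℝ) : ℝ := t 1 ^ 2 - t 0 ^ 2

theorem pencil_eq_diag (t : Fin 2 → ℝ) (u v w : ℝ) :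
    t 0 ^ 2 * Q₁ u v w + 2 * t 0 * t 1 * Q₂ u v w + t 1 ^ 2 * Q₃ u v w =
      (coeffV t - 9 * t 1 ^ 2) * u ^ 2 + coeffV t * v ^ 2 + coeffW t * w ^ 2 := by
  simp only [Q₁, Q₂, Q₃, coeffV, coeffW]; ring

theorem exists_pencil_nonneg_iff (t : Fin 2 → ℝ) :
    (∃ u v w : ℝ, (u, v, w) ≠ (0, 0, 0) ∧
      0 ≤ t 0 ^ 2 * Q₁ u v w + 2 * t 0 * t 1 * Q₂ u v w + t 1 ^ 2 * Q₃ u v w) ↔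
      0 ≤ coeffW t ∨ 0 ≤ coeffV t := by
  simp only [pencil_eq_diag, exists_ne_zero_diag_nonneg_iff]
  have hUV : coeffV t - 9 * t 1 ^ 2 ≤ coeffV t := by nlinarith [sq_nonneg (t 1)]
  constructor
  · rintro (h | h | h)
    exacts [.inr (h.trans hUV), .inr h, .inl h]
  · rintro (h | h)
    exacts [.inr (.inr h), .inr (.inl h)]

theorem coeffV_smul (c : ℝ) (t : Fin 2 → ℝ) : coeffV (c • t) = c ^ 2 * coeffV t := by
  simp only [coeffV, Pi.smul_apply, smul_eq_mul]; ring

theorem coeffW_smul (c : ℝ) (t : Fin 2 → ℝ) : coeffW (c • t) = c ^ 2 * coeffW t := by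
  simp only [coeffW, Pi.smul_apply, smul_eq_mul]; ring

theorem continuous_coeffV : Continuous coeffV := by unfold coeffV; fun_prop

theorem continuous_coeffW : Continuous coeffW := by unfold coeffW; fun_prop

theorem eq_zero_of_coeffW_nonneg_of_coeffV_nonneg {t : Fin 2 → ℝ} (hW : 0 ≤ coeffW t)
    (hV : 0 ≤ coeffV t) : t = 0 := by
  unfold coeffW coeffV at *
  have h1 : t 1 = 0 := by nlinarith [sq_nonneg (t 0 - t 1)]
  exact eq_zero_of_apply_zero_of_apply_one (by nlinarith) h1

theorem disjoint_nonnegLocus_coeffW_coeffV :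
    Disjoint (nonnegLocus coeffW) (nonnegLocus coeffV) := by
  rw [Set.disjoint_left]
  rintro _ ⟨t, rfl, hW⟩ hV
  exact t.2 (eq_zero_of_coeffW_nonneg_of_coeffV_nonneg hW
    ((mk_mem_nonnegLocus_iff coeffV_smul).mp hV))

theorem nonnegLocus_coeffW_eq : nonnegLocus coeffW = chart₁ '' Icc (-1) 1 := by
  rw [nonnegLocus_eq_image_chart₁ coeffW_smul]
  · congr 1; ext s; simp [coeffW, abs_le]
  · intro t ht h1
    unfold coeffW at ht
    exact eq_zero_of_apply_zero_of_apply_one (by nlinarith) h1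

theorem nonnegLocus_coeffV_eq : nonnegLocus coeffV = chart₀ '' Icc (-1 / 5) (1 / 3) := by
  rw [nonnegLocus_eq_image_chart₀ coeffV_smul]
  · congr 1
    ext s
    simp only [coeffV, Matrix.cons_val_zero, Matrix.cons_val_one, Matrix.cons_val_fin_one,
      mem_ofPred_eq, mem_Icc]
    constructor
    · intro h; constructor <;> nlinarith
    · rintro ⟨h1, h2⟩; nlinarith
  · intro t ht h0
    unfold coeffV at ht
    exact eq_zero_of_apply_zero_of_apply_one h0 (by nlinarith)

end TwoNestedOvals

open RP TwoNestedOvals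

/-- For the quadrics `Q₁ = u²+v²−w²`, `Q₂ = u²+v²`, `Q₃ = −24u²−15v²+w²`, the image
`S₁ ⊆ ℝP¹` of the real points of the quadric surface bundle `π₁ : Y → ℙ¹` has exactly two
connected components; consequently `Y(ℝ)` has exactly two connected components (here the
real isotopy class of the discriminant quartic `Δ` is two nested ovals). -/
theorem two_nested_ovals_example_two_components
    (S₁ : Set (RP 2))
    (hS₁ : S₁ = {x | ∃ t : {x : Fin 2 → ℝ // x ≠ 0}, Quot.mk (projRel 2) t = x ∧
      ∃ u v w : ℝ, (u, v, w) ≠ (0, 0, 0) ∧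
        0 ≤ (t : Fin 2 → ℝ) 0 ^ 2 * Q₁ u v w
          + 2 * (t : Fin 2 → ℝ) 0 * (t : Fin 2 → ℝ) 1 * Q₂ u v w
          + (t : Fin 2 → ℝ) 1 ^ 2 * Q₃ u v w}) :
    Nonempty (ConnectedComponents ↥S₁ ≃ Fin 2) := by
  have hS : S₁ = nonnegLocus coeffW ∪ nonnegLocus coeffV := by
    ext x
    simp only [hS₁, exists_pencil_nonneg_iff, and_or_left, exists_or]
    rfl
  refine nonempty_connectedComponents_equiv_fin_two_of_union hS
    (isClosed_nonnegLocus coeffW_smul continuous_coeffW)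
    (isClosed_nonnegLocus coeffV_smul continuous_coeffV) disjoint_nonnegLocus_coeffW_coeffV ?_ ?_
  · rw [nonnegLocus_coeffW_eq]
    exact (isConnected_Icc (by norm_num)).image _ continuous_chart₁.continuousOn
  · rw [nonnegLocus_coeffV_eq]
    exact (isConnected_Icc (by norm_num)).image _ continuous_chart₀.continuousOn
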